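/- arXiv:2409.19977 — 3 statements merged into one kernel-verified Lean document; each statement's English description precedes it below -/
import Mathlib

section
/- Let n ∈ ℕ and let h_μ, h_σ, r_μ, r_σ, t_μ, t_σ ∈ ℝⁿ with every entry of h_σ, r_σ, t_σ nonzero. Let x₀ be the product over i of the uniform probability measure on [−√3, √3] (a probability measure on ℝⁿ). Define A(x) = r_σ ⊙ (h_σ ⊙ x + h_μ) + r_μ and B(x) = t_σ ⊙ x + t_μ. Then W₂²(A_*x₀, B_*x₀) = ‖r_σ ⊙ h_μ + r_μ − t_μ‖² + ‖|r_σ ⊙ h_σ| − |t_σ|‖², where A_*x₀ and B_*x₀ denote the pushforward measures of x₀ under A and B. -/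
open MeasureTheory ProbabilityTheory
open scoped ENNReal NNReal

/-- The uniform probability measure on `[a, b]`: `(b - a)⁻¹ • (volume.restrict (Set.Icc a b))`. -/
noncomputable def unif (a b : ℝ) : Measure ℝ :=
  (ENNReal.ofReal (b - a))⁻¹ • volume.restrict (Set.Icc a b)

notation "ν₀" => unif (-Real.sqrt 3) (Real.sqrt 3)


lemma sqrt3_pos : (0:ℝ) < Real.sqrt 3 := Real.sqrt_pos.2 (by norm_num)

lemma width_pos : (0:ℝ) < Real.sqrt 3 - (-Real.sqrt 3) := by linarith [sqrt3_pos]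

instance unif_prob : IsProbabilityMeasure ν₀ := by
  constructor
  rw [unif, Measure.smul_apply, Measure.restrict_apply MeasurableSet.univ, Set.univ_inter,
    Real.volume_Icc, smul_eq_mul]
  rw [ENNReal.inv_mul_cancel]
  · simp [ENNReal.ofReal_eq_zero, not_le, width_pos]
  · exact ENNReal.ofReal_ne_top

lemma integral_unif (f : ℝ → ℝ) :
    ∫ x, f x ∂ν₀ = (2 * Real.sqrt 3)⁻¹ * ∫ x in (-Real.sqrt 3)..(Real.sqrt 3), f x := by
  rw [unif, integral_smul_measure, intervalIntegral.integral_of_le (by linarith [sqrt3_pos]),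
    ← MeasureTheory.integral_Icc_eq_integral_Ioc]
  rw [ENNReal.toReal_inv, ENNReal.toReal_ofReal (by linarith [width_pos])]
  rw [smul_eq_mul]
  congr 2
  ring

lemma integral_unif_id : ∫ x, x ∂ν₀ = 0 := by
  rw [integral_unif]
  simp [integral_id]

lemma integral_unif_sq : ∫ x, x ^ 2 ∂ν₀ = 1 := by
  rw [integral_unif (fun x => x ^ 2)]
  rw [integral_pow]
  have h3 : Real.sqrt 3 ^ 2 = 3 := Real.sq_sqrt (by norm_num)
  have := sqrt3_pos
  field_simp
  ring_nf
  nlinarith [h3]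

lemma unif_ae_mem : ∀ᵐ x ∂ν₀, x ∈ Set.Icc (-Real.sqrt 3) (Real.sqrt 3) := by
  rw [unif]
  exact (Measure.ae_smul_measure (ae_restrict_mem measurableSet_Icc) _)

lemma memℒp_unif_id : MemLp (fun x : ℝ => x) 2 ν₀ := by
  refine MemLp.of_bound aestronglyMeasurable_id (Real.sqrt 3) ?_
  filter_upwards [unif_ae_mem] with x hx
  rw [Real.norm_eq_abs, abs_le]
  exact ⟨hx.1, hx.2⟩

section PiLemmas
variable {n : ℕ}

lemma pi_map_eval (μ : Fin n → Measure ℝ) [∀ i, IsProbabilityMeasure (μ i)] (i : Fin n) :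
    (Measure.pi μ).map (fun x => x i) = μ i := by
  ext s hs
  rw [Measure.map_apply (measurable_pi_apply i) hs]
  have : (fun x : Fin n → ℝ => x i) ⁻¹' s
      = Set.pi Set.univ (Function.update (fun _ => Set.univ) i s) := by
    ext x
    simp only [Set.mem_preimage, Set.mem_pi, Set.mem_univ, forall_true_left]
    constructor
    · intro hx j
      rcases eq_or_ne j i with h | h
      · subst h; simpa using hx
      · simp [Function.update_of_ne h]
    · intro hx; have := hx i; simpa using this
  rw [this, Measure.pi_pi]
  rw [Finset.prod_eq_single i]
  · simp
  · intro j _ hj; simp [Function.update_of_ne hj]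
  · simp

lemma pi_map_pi (μ : Fin n → Measure ℝ) [∀ i, IsProbabilityMeasure (μ i)]
    (f : Fin n → ℝ → ℝ) (hf : ∀ i, Measurable (f i)) :
    (Measure.pi μ).map (fun x i => f i (x i)) = Measure.pi (fun i => (μ i).map (f i)) := by
  haveI : ∀ i, IsProbabilityMeasure ((μ i).map (f i)) :=
    fun i => Measure.isProbabilityMeasure_map (hf i).aemeasurable
  refine (Measure.pi_eq fun s hs => ?_).symm
  have hmeas : Measurable (fun x : Fin n → ℝ => fun i => f i (x i)) :=
    measurable_pi_lambda _ fun i => (hf i).comp (measurable_pi_apply i)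
  rw [Measure.map_apply hmeas (MeasurableSet.univ_pi hs)]
  have : (fun x : Fin n → ℝ => fun i => f i (x i)) ⁻¹' Set.pi Set.univ s
      = Set.pi Set.univ (fun i => f i ⁻¹' s i) := by
    ext x; simp [Set.mem_pi]
  rw [this, Measure.pi_pi]
  exact Finset.prod_congr rfl fun i _ => (Measure.map_apply (hf i) (hs i)).symm

end PiLemmas

lemma unif_map_neg :
    Measure.map (fun x : ℝ => -x) (unif (-Real.sqrt 3) (Real.sqrt 3))
      = unif (-Real.sqrt 3) (Real.sqrt 3) := by
  rw [unif, Measure.map_smul]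
  congr 1
  ext s hs
  rw [Measure.map_apply measurable_neg hs, Measure.restrict_apply hs,
    Measure.restrict_apply (hs.preimage measurable_neg)]
  have h1 : (fun x : ℝ => -x) ⁻¹' s ∩ Set.Icc (-Real.sqrt 3) (Real.sqrt 3)
      = (fun x : ℝ => -x) ⁻¹' (s ∩ Set.Icc (-Real.sqrt 3) (Real.sqrt 3)) := by
    ext x
    simp only [Set.mem_inter_iff, Set.mem_preimage, Set.mem_Icc, and_congr_right_iff]
    intro _
    constructor <;> intro h <;> constructor <;> linarith [h.1, h.2]
  rw [h1]
  have := Measure.measure_preimage_neg (volume : Measure ℝ)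
    (s ∩ Set.Icc (-Real.sqrt 3) (Real.sqrt 3))
  simpa using this

lemma unif_map_sign_mul (e : ℝ) (he : e = 1 ∨ e = -1) :
    Measure.map (fun x : ℝ => e * x) (unif (-Real.sqrt 3) (Real.sqrt 3))
      = unif (-Real.sqrt 3) (Real.sqrt 3) := by
  rcases he with h | h <;> subst h
  · simp only [one_mul]
    exact Measure.map_id
  · have h2 : (fun x : ℝ => (-1 : ℝ) * x) = fun x : ℝ => -x := by funext x; ring
    rw [h2, unif_map_neg]

variable {Ω : Type*} [MeasurableSpace Ω] {γ : Measure Ω}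

lemma L2.integrable_mul {f g : Ω → ℝ} (hf : MemLp f 2 γ) (hg : MemLp g 2 γ) :
    Integrable (fun x => f x * g x) γ := by
  have h : (fun x => f x * g x)
      = fun x => ((f x + g x) ^ 2 - f x ^ 2 - g x ^ 2) / 2 := by funext x; ring
  rw [h]
  exact (((hf.add hg).integrable_sq.sub hf.integrable_sq).sub hg.integrable_sq).div_const 2

lemma centered_sq_int [IsProbabilityMeasure γ] {f : Ω → ℝ} (hf : MemLp f 2 γ) {m s : ℝ}
    (hfm : ∫ x, f x ∂γ = m) (hf2 : ∫ x, f x ^ 2 ∂γ = m ^ 2 + s ^ 2) :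
    ∫ x, (f x - m) ^ 2 ∂γ = s ^ 2 := by
  have hfi : Integrable f γ := hf.integrable one_le_two
  have hint1 : Integrable (fun x => f x ^ 2 - 2 * m * f x) γ := by
    have := hf.integrable_sq.sub ((hfi.const_mul (2 * m)))
    exact this
  have h : (fun x => (f x - m) ^ 2)
      = fun x => (f x ^ 2 - 2 * m * f x) + m ^ 2 := by funext x; ring
  rw [h, integral_add hint1 (integrable_const _)]
  have e : ∫ x, 2 * m * f x ∂γ = 2 * m * m := by
    have := integral_const_mul (μ := γ) (2 * m) f
    simpa [hfm, mul_assoc] using this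
  have h2 : ∫ x, (f x ^ 2 - 2 * m * f x) ∂γ = (m ^ 2 + s ^ 2) - 2 * m * m := by
    rw [integral_sub hf.integrable_sq (by simpa [mul_assoc] using (hfi.const_mul (2 * m))), hf2, e]
  rw [h2]
  simp
  ring

lemma sq_int_lower [IsProbabilityMeasure γ] (f g : Ω → ℝ) (hf : MemLp f 2 γ)
    (hg : MemLp g 2 γ) (m1 m2 s1 s2 : ℝ) (hs1 : 0 ≤ s1) (hs2 : 0 ≤ s2)
    (hfm : ∫ x, f x ∂γ = m1) (hgm : ∫ x, g x ∂γ = m2)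
    (hf2 : ∫ x, f x ^ 2 ∂γ = m1 ^ 2 + s1 ^ 2) (hg2 : ∫ x, g x ^ 2 ∂γ = m2 ^ 2 + s2 ^ 2) :
    (m1 - m2) ^ 2 + (s1 - s2) ^ 2 ≤ ∫ x, (f x - g x) ^ 2 ∂γ := by
  have hfi : Integrable f γ := hf.integrable one_le_two
  have hgi : Integrable g γ := hg.integrable one_le_two
  have hfg : Integrable (fun x => f x * g x) γ := L2.integrable_mul hf hg
  have hF : MemLp (fun x => f x - m1) 2 γ := hf.sub (memLp_const m1)
  have hG : MemLp (fun x => g x - m2) 2 γ := hg.sub (memLp_const m2)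
  have hF2 : ∫ x, (f x - m1) ^ 2 ∂γ = s1 ^ 2 := centered_sq_int hf hfm hf2
  have hG2 : ∫ x, (g x - m2) ^ 2 ∂γ = s2 ^ 2 := centered_sq_int hg hgm hg2
  -- covariance bound via Hölder
  have hcov : ∫ x, (f x - m1) * (g x - m2) ∂γ ≤ s1 * s2 := by
    have habs : ∫ x, (f x - m1) * (g x - m2) ∂γ ≤ ∫ x, |f x - m1| * |g x - m2| ∂γ := by
      refine le_trans (le_abs_self _) ?_
      rw [← Real.norm_eq_abs]
      refine le_trans (norm_integral_le_integral_norm _) ?_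
      refine le_of_eq (integral_congr_ae (Filter.Eventually.of_forall fun x => ?_))
      simp [Real.norm_eq_abs, abs_mul]
    refine habs.trans ?_
    have hpq : Real.HolderConjugate 2 2 := Real.HolderConjugate.two_two
    have h2 : ENNReal.ofReal (2:ℝ) = 2 := by norm_num
    have key := integral_mul_le_Lp_mul_Lq_of_nonneg (μ := γ) hpq
      (f := fun x => |f x - m1|) (g := fun x => |g x - m2|)
      (Filter.Eventually.of_forall fun x => abs_nonneg _)
      (Filter.Eventually.of_forall fun x => abs_nonneg _)
      (h2 ▸ hF.abs) (h2 ▸ hG.abs)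
    refine key.trans (le_of_eq ?_)
    have e1 : ∫ x, |f x - m1| ^ (2:ℝ) ∂γ = s1 ^ 2 := by
      rw [← hF2]
      refine integral_congr_ae (Filter.Eventually.of_forall fun x => ?_)
      show |f x - m1| ^ (2:ℝ) = (f x - m1) ^ 2
      have hh : |f x - m1| ^ (2:ℝ) = |f x - m1| ^ (2:ℕ) := by
        rw [← Real.rpow_natCast]; norm_num
      rw [hh, sq_abs]
    have e2 : ∫ x, |g x - m2| ^ (2:ℝ) ∂γ = s2 ^ 2 := by
      rw [← hG2]
      refine integral_congr_ae (Filter.Eventually.of_forall fun x => ?_)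
      show |g x - m2| ^ (2:ℝ) = (g x - m2) ^ 2
      have hh : |g x - m2| ^ (2:ℝ) = |g x - m2| ^ (2:ℕ) := by
        rw [← Real.rpow_natCast]; norm_num
      rw [hh, sq_abs]
    rw [e1, e2, ← Real.sqrt_eq_rpow, ← Real.sqrt_eq_rpow, Real.sqrt_sq hs1, Real.sqrt_sq hs2]
  -- expand product
  have hmul : ∫ x, f x * g x ∂γ ≤ m1 * m2 + s1 * s2 := by
    have hexp : (fun x => (f x - m1) * (g x - m2))
        = fun x => f x * g x - m2 * f x - m1 * g x + m1 * m2 := by funext x; ring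
    have hint : Integrable (fun x => f x * g x - m2 * f x - m1 * g x) γ :=
      (hfg.sub (hfi.const_mul m2)).sub (hgi.const_mul m1)
    have hint2 : Integrable (fun x => f x * g x - m2 * f x) γ := hfg.sub (hfi.const_mul m2)
    rw [hexp, integral_add hint (integrable_const _),
      integral_sub hint2 (hgi.const_mul m1),
      integral_sub hfg (hfi.const_mul m2), integral_const_mul, integral_const_mul,
      hfm, hgm] at hcov
    simp at hcov
    linarith
  have hexp2 : (fun x => (f x - g x) ^ 2)
      = fun x => (f x ^ 2 + g x ^ 2) - 2 * (f x * g x) := by funext x; ring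
  have hsum : Integrable (fun x => f x ^ 2 + g x ^ 2) γ := hf.integrable_sq.add hg.integrable_sq
  rw [hexp2, integral_sub hsum (hfg.const_mul 2),
    integral_add hf.integrable_sq hg.integrable_sq, integral_const_mul, hf2, hg2]
  nlinarith [hmul]

lemma nu_int_id_integrable : Integrable (fun t : ℝ => t) ν₀ := memℒp_unif_id.integrable one_le_two
lemma nu_int_sq_integrable : Integrable (fun t : ℝ => t ^ 2) ν₀ := memℒp_unif_id.integrable_sq

lemma nu_int_affine (α β : ℝ) : ∫ t, (α * t + β) ∂ν₀ = β := by
  rw [integral_add ((nu_int_id_integrable.const_mul α)) (integrable_const β),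
    integral_const_mul, integral_unif_id, integral_const]
  simp

lemma nu_int_affine_sq (α β : ℝ) : ∫ t, (α * t + β) ^ 2 ∂ν₀ = α ^ 2 + β ^ 2 := by
  have h : (fun t : ℝ => (α * t + β) ^ 2)
      = fun t : ℝ => α ^ 2 * t ^ 2 + (2 * α * β * t + β ^ 2) := by funext t; ring
  have h1 : Integrable (fun t : ℝ => 2 * α * β * t + β ^ 2) ν₀ :=
    (nu_int_id_integrable.const_mul _).add (integrable_const _)
  have h2 : Integrable (fun t : ℝ => α ^ 2 * t ^ 2) ν₀ := nu_int_sq_integrable.const_mul _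
  have h3 : Integrable (fun t : ℝ => 2 * α * β * t) ν₀ := nu_int_id_integrable.const_mul _
  rw [h, integral_add h2 h1, integral_add h3 (integrable_const _),
    integral_const_mul, integral_const_mul, integral_unif_id, integral_unif_sq, integral_const]
  simp

section PiLevel
variable {n : ℕ}

notation "μpi" n => (Measure.pi fun _ : Fin n => ν₀)

lemma int_eval {g : ℝ → ℝ} (hg : AEStronglyMeasurable g ν₀) (i : Fin n) :
    ∫ x : Fin n → ℝ, g (x i) ∂(μpi n) = ∫ t, g t ∂ν₀ := by
  have h := pi_map_eval (fun _ : Fin n => ν₀) i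
  have key := integral_map (φ := fun x : Fin n → ℝ => x i)
    (μ := Measure.pi fun _ : Fin n => ν₀)
    (measurable_pi_apply i).aemeasurable (f := g) (by rw [h]; exact hg)
  rw [h] at key
  exact key.symm

lemma memℒp_eval (i : Fin n) : MemLp (fun x : Fin n → ℝ => x i) 2 (μpi n) := by
  have h := pi_map_eval (fun _ : Fin n => ν₀) i
  have := (memLp_map_measure_iff (p := 2) (f := fun x : Fin n → ℝ => x i) (g := fun t : ℝ => t)
    (by rw [h]; exact aestronglyMeasurable_id) (measurable_pi_apply i).aemeasurable).1
  exact this (by rw [h]; exact memℒp_unif_id)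

lemma memℒp_affine (α β : ℝ) (i : Fin n) :
    MemLp (fun x : Fin n → ℝ => α * x i + β) 2 (μpi n) :=
  ((memℒp_eval i).const_mul α).add (memLp_const β)

lemma int_affine (α β : ℝ) (i : Fin n) :
    ∫ x : Fin n → ℝ, (α * x i + β) ∂(μpi n) = β := by
  rw [int_eval (g := fun t => α * t + β) ((by continuity : Continuous fun t : ℝ => α * t + β).aestronglyMeasurable) i, nu_int_affine]

lemma int_affine_sq (α β : ℝ) (i : Fin n) :
    ∫ x : Fin n → ℝ, (α * x i + β) ^ 2 ∂(μpi n) = α ^ 2 + β ^ 2 := by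
  rw [int_eval (g := fun t => (α * t + β) ^ 2) ((by continuity : Continuous fun t : ℝ => (α * t + β) ^ 2).aestronglyMeasurable) i, nu_int_affine_sq]

end PiLevel


/-- Squared 2-Wasserstein distance between two measures on `ℝⁿ = (Fin n → ℝ)` with the
Euclidean norm `‖x - y‖² = ∑ i, (x i - y i)²`: the infimum over all couplings `γ` of `p` and
`q` of `∫ ‖x - y‖² dγ(x, y)`. -/
noncomputable def W2sqPi {n : ℕ} (p q : Measure (Fin n → ℝ)) : ℝ :=
  sInf { c | ∃ γ : Measure ((Fin n → ℝ) × (Fin n → ℝ)), IsProbabilityMeasure γ ∧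
    γ.map Prod.fst = p ∧ γ.map Prod.snd = q ∧ c = ∫ z, ∑ i, (z.1 i - z.2 i) ^ 2 ∂γ }

/-- NFE-1 scoring function, uniform case: the squared 2-Wasserstein distance between the
pushforwards of the product uniform measure on [-√3, √3]ⁿ under the affine maps
A(x) = r_σ ⊙ (h_σ ⊙ x + h_μ) + r_μ and B(x) = t_σ ⊙ x + t_μ. -/
theorem W2sq_affine_pushforward_unif (n : ℕ) (hμ hσ rμ rσ tμ tσ : Fin n → ℝ)
    (hhσ : ∀ i, hσ i ≠ 0) (hrσ : ∀ i, rσ i ≠ 0) (htσ : ∀ i, tσ i ≠ 0) :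
    W2sqPi
      ((Measure.pi fun _ : Fin n => unif (-Real.sqrt 3) (Real.sqrt 3)).map
        fun x => rσ * (hσ * x + hμ) + rμ)
      ((Measure.pi fun _ : Fin n => unif (-Real.sqrt 3) (Real.sqrt 3)).map
        fun x => tσ * x + tμ) =
      (∑ i, ((rσ * hμ + rμ - tμ) i) ^ 2) + ∑ i, ((|rσ * hσ| - |tσ|) i) ^ 2 := by
  classical
  set μp : Measure (Fin n → ℝ) := Measure.pi fun _ : Fin n => ν₀ with hμp
  haveI : IsProbabilityMeasure μp := by rw [hμp]; infer_instance
  set a : Fin n → ℝ := fun i => rσ i * hσ i with ha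
  set bb : Fin n → ℝ := fun i => rσ i * hμ i + rμ i with hbb
  set A : (Fin n → ℝ) → (Fin n → ℝ) := fun x => rσ * (hσ * x + hμ) + rμ with hA
  set B : (Fin n → ℝ) → (Fin n → ℝ) := fun x => tσ * x + tμ with hB
  have hAx : ∀ (x : Fin n → ℝ) i, A x i = a i * x i + bb i := by
    intro x i
    simp only [hA, Pi.add_apply, Pi.mul_apply, ha, hbb]
    ring
  have hBx : ∀ (x : Fin n → ℝ) i, B x i = tσ i * x i + tμ i := by
    intro x i
    simp only [hB, Pi.add_apply, Pi.mul_apply]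
  have hAmeas : Measurable A := by
    refine measurable_pi_lambda _ fun i => ?_
    have h1 : (fun x : Fin n → ℝ => A x i) = fun x => a i * x i + bb i :=
      funext fun x => hAx x i
    rw [h1]
    exact ((measurable_pi_apply i).const_mul _).add_const _
  have hBmeas : Measurable B := by
    refine measurable_pi_lambda _ fun i => ?_
    have h1 : (fun x : Fin n → ℝ => B x i) = fun x => tσ i * x i + tμ i :=
      funext fun x => hBx x i
    rw [h1]
    exact ((measurable_pi_apply i).const_mul _).add_const _
  set p : Measure (Fin n → ℝ) := μp.map A with hp
  set q : Measure (Fin n → ℝ) := μp.map B with hq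
  haveI : IsProbabilityMeasure p := Measure.isProbabilityMeasure_map hAmeas.aemeasurable
  haveI : IsProbabilityMeasure q := Measure.isProbabilityMeasure_map hBmeas.aemeasurable
  set τ : ℝ := (∑ i, (bb i - tμ i) ^ 2) + ∑ i, (|a i| - |tσ i|) ^ 2 with hτ
  have hRHS : ((∑ i, ((rσ * hμ + rμ - tμ) i) ^ 2) + ∑ i, ((|rσ * hσ| - |tσ|) i) ^ 2) = τ := by
    rw [hτ]
    congr 1 <;> refine Finset.sum_congr rfl fun i _ => ?_ <;>
      simp [Pi.abs_apply, Pi.sub_apply, Pi.add_apply, Pi.mul_apply, ha, hbb]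
  -- moments of p
  have hp_mem : ∀ i, MemLp (fun z : Fin n → ℝ => z i) 2 p := by
    intro i
    refine (memLp_map_measure_iff (p := 2)
      (measurable_pi_apply i).aestronglyMeasurable hAmeas.aemeasurable).2 ?_
    have h1 : ((fun z : Fin n → ℝ => z i) ∘ A) = fun x : Fin n → ℝ => a i * x i + bb i :=
      funext fun x => hAx x i
    rw [h1]
    exact memℒp_affine _ _ i
  have hq_mem : ∀ i, MemLp (fun z : Fin n → ℝ => z i) 2 q := by
    intro i
    refine (memLp_map_measure_iff (p := 2)
      (measurable_pi_apply i).aestronglyMeasurable hBmeas.aemeasurable).2 ?_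
    have h1 : ((fun z : Fin n → ℝ => z i) ∘ B) = fun x : Fin n → ℝ => tσ i * x i + tμ i :=
      funext fun x => hBx x i
    rw [h1]
    exact memℒp_affine _ _ i
  have hp_m1 : ∀ i, ∫ z, z i ∂p = bb i := by
    intro i
    rw [hp, integral_map hAmeas.aemeasurable (measurable_pi_apply i).aestronglyMeasurable]
    have h1 : (fun x : Fin n → ℝ => A x i) = fun x => a i * x i + bb i :=
      funext fun x => hAx x i
    show ∫ x, A x i ∂μp = bb i
    rw [h1, hμp]
    exact int_affine _ _ i
  have hq_m1 : ∀ i, ∫ z, z i ∂q = tμ i := by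
    intro i
    rw [hq, integral_map hBmeas.aemeasurable (measurable_pi_apply i).aestronglyMeasurable]
    have h1 : (fun x : Fin n → ℝ => B x i) = fun x => tσ i * x i + tμ i :=
      funext fun x => hBx x i
    show ∫ x, B x i ∂μp = tμ i
    rw [h1, hμp]
    exact int_affine _ _ i
  have hp_m2 : ∀ i, ∫ z, (z i) ^ 2 ∂p = bb i ^ 2 + |a i| ^ 2 := by
    intro i
    rw [hp, integral_map hAmeas.aemeasurable
      ((measurable_pi_apply i).pow_const 2).aestronglyMeasurable]
    have h1 : (fun x : Fin n → ℝ => (A x i) ^ 2) = fun x => (a i * x i + bb i) ^ 2 :=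
      funext fun x => by rw [hAx]
    show ∫ x, (A x i) ^ 2 ∂μp = bb i ^ 2 + |a i| ^ 2
    rw [h1, hμp, int_affine_sq, sq_abs]
    ring
  have hq_m2 : ∀ i, ∫ z, (z i) ^ 2 ∂q = tμ i ^ 2 + |tσ i| ^ 2 := by
    intro i
    rw [hq, integral_map hBmeas.aemeasurable
      ((measurable_pi_apply i).pow_const 2).aestronglyMeasurable]
    have h1 : (fun x : Fin n → ℝ => (B x i) ^ 2) = fun x => (tσ i * x i + tμ i) ^ 2 :=
      funext fun x => by rw [hBx]
    show ∫ x, (B x i) ^ 2 ∂μp = tμ i ^ 2 + |tσ i| ^ 2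
    rw [h1, hμp, int_affine_sq, sq_abs]
    ring
  -- the optimal coupling
  set ε : Fin n → ℝ := fun i => if 0 ≤ a i * tσ i then (1:ℝ) else -1 with hε
  have hε_pm : ∀ i, ε i = 1 ∨ ε i = -1 := by
    intro i; rw [hε]; dsimp only; split <;> simp
  set c' : Fin n → ℝ := fun i => ε i * tσ i with hc'
  set C : (Fin n → ℝ) → (Fin n → ℝ) := fun x i => c' i * x i + tμ i with hC
  have hCmeas : Measurable C :=
    measurable_pi_lambda _ fun i => ((measurable_pi_apply i).const_mul _).add_const _
  have hsignsq : ∀ i, (a i - c' i) ^ 2 = (|a i| - |tσ i|) ^ 2 := by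
    intro i
    rcases le_or_gt 0 (a i * tσ i) with h | h
    · have habs : |a i| * |tσ i| = a i * tσ i := by rw [← abs_mul, abs_of_nonneg h]
      have : c' i = tσ i := by rw [hc', hε]; dsimp only; rw [if_pos h]; ring
      rw [this]
      nlinarith [sq_abs (a i), sq_abs (tσ i), habs]
    · have habs : |a i| * |tσ i| = -(a i * tσ i) := by rw [← abs_mul, abs_of_neg h]
      have : c' i = -tσ i := by rw [hc', hε]; dsimp only; rw [if_neg (not_le.2 h)]; ring
      rw [this]
      nlinarith [sq_abs (a i), sq_abs (tσ i), habs]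
  have hSmeas : Measurable (fun x : Fin n → ℝ => fun i => ε i * x i) :=
    measurable_pi_lambda _ fun i => (measurable_pi_apply i).const_mul _
  have hmapS : μp.map (fun x : Fin n → ℝ => fun i => ε i * x i) = μp := by
    rw [hμp, pi_map_pi _ (fun i t => ε i * t) (fun i => measurable_id.const_mul (ε i))]
    have h1 : (fun i : Fin n => Measure.map (fun t => ε i * t) ν₀) = fun _ : Fin n => ν₀ :=
      funext fun i => unif_map_sign_mul (ε i) (hε_pm i)
    rw [h1]
  have hCB : μp.map C = μp.map B := by
    have hcomp : C = B ∘ (fun x : Fin n → ℝ => fun i => ε i * x i) := by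
      funext x
      funext i
      simp only [Function.comp_apply, hC, hB, Pi.add_apply, Pi.mul_apply, hc']
      ring
    rw [hcomp, ← Measure.map_map hBmeas hSmeas, hmapS]
  set pair : (Fin n → ℝ) → ((Fin n → ℝ) × (Fin n → ℝ)) := fun x => (A x, C x) with hpair
  have hpairmeas : Measurable pair := hAmeas.prodMk hCmeas
  have hsum_meas : Measurable (fun z : (Fin n → ℝ) × (Fin n → ℝ) =>
      ∑ i, (z.1 i - z.2 i) ^ 2) := by
    refine Finset.measurable_sum _ fun i _ => ?_
    exact (((measurable_pi_apply i).comp measurable_fst).sub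
      ((measurable_pi_apply i).comp measurable_snd)).pow_const 2
  have hterm_eq : ∀ i, (fun x : Fin n → ℝ => (A x i - C x i) ^ 2)
      = fun x => ((a i - c' i) * x i + (bb i - tμ i)) ^ 2 := by
    intro i
    funext x
    rw [hAx]
    simp only [hC]
    ring
  have hmem : τ ∈ { c | ∃ γ : Measure ((Fin n → ℝ) × (Fin n → ℝ)), IsProbabilityMeasure γ ∧
      γ.map Prod.fst = p ∧ γ.map Prod.snd = q ∧
      c = ∫ z, ∑ i, (z.1 i - z.2 i) ^ 2 ∂γ } := by
    refine ⟨μp.map pair, Measure.isProbabilityMeasure_map hpairmeas.aemeasurable, ?_, ?_, ?_⟩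
    · rw [Measure.map_map measurable_fst hpairmeas]
      rfl
    · rw [Measure.map_map measurable_snd hpairmeas]
      exact hCB
    · rw [integral_map hpairmeas.aemeasurable hsum_meas.aestronglyMeasurable]
      show τ = ∫ x, ∑ i, (A x i - C x i) ^ 2 ∂μp
      rw [integral_finset_sum _ (fun i _ => by
        rw [hterm_eq i, hμp]
        exact (memℒp_affine _ _ i).integrable_sq)]
      have h3 : ∀ i ∈ Finset.univ, ∫ x, (A x i - C x i) ^ 2 ∂μp
          = (bb i - tμ i) ^ 2 + (|a i| - |tσ i|) ^ 2 := by
        intro i _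
        rw [hterm_eq i, hμp, int_affine_sq, ← hsignsq i]
        ring
      rw [Finset.sum_congr rfl h3, hτ, Finset.sum_add_distrib]
  have hlb : ∀ c ∈ { c | ∃ γ : Measure ((Fin n → ℝ) × (Fin n → ℝ)), IsProbabilityMeasure γ ∧
      γ.map Prod.fst = p ∧ γ.map Prod.snd = q ∧
      c = ∫ z, ∑ i, (z.1 i - z.2 i) ^ 2 ∂γ }, τ ≤ c := by
    rintro c ⟨γ, hγprob, hγ1, hγ2, rfl⟩
    haveI := hγprob
    have hU : ∀ i, MemLp (fun z : (Fin n → ℝ) × (Fin n → ℝ) => z.1 i) 2 γ := by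
      intro i
      have h1 := hp_mem i
      rw [← hγ1] at h1
      exact (memLp_map_measure_iff (p := 2)
        (measurable_pi_apply i).aestronglyMeasurable measurable_fst.aemeasurable).1 h1
    have hV : ∀ i, MemLp (fun z : (Fin n → ℝ) × (Fin n → ℝ) => z.2 i) 2 γ := by
      intro i
      have h1 := hq_mem i
      rw [← hγ2] at h1
      exact (memLp_map_measure_iff (p := 2)
        (measurable_pi_apply i).aestronglyMeasurable measurable_snd.aemeasurable).1 h1
    have hUm : ∀ i, ∫ z, z.1 i ∂γ = bb i := by
      intro i
      have h := integral_map (μ := γ) measurable_fst.aemeasurable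
        (measurable_pi_apply i).aestronglyMeasurable
      rw [hγ1] at h
      rw [← h]
      exact hp_m1 i
    have hVm : ∀ i, ∫ z, z.2 i ∂γ = tμ i := by
      intro i
      have h := integral_map (μ := γ) measurable_snd.aemeasurable
        (measurable_pi_apply i).aestronglyMeasurable
      rw [hγ2] at h
      rw [← h]
      exact hq_m1 i
    have hU2 : ∀ i, ∫ z, (z.1 i) ^ 2 ∂γ = bb i ^ 2 + |a i| ^ 2 := by
      intro i
      have h := integral_map (μ := γ) measurable_fst.aemeasurable
        ((measurable_pi_apply i).pow_const 2).aestronglyMeasurable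
      rw [hγ1] at h
      rw [← h]
      exact hp_m2 i
    have hV2 : ∀ i, ∫ z, (z.2 i) ^ 2 ∂γ = tμ i ^ 2 + |tσ i| ^ 2 := by
      intro i
      have h := integral_map (μ := γ) measurable_snd.aemeasurable
        ((measurable_pi_apply i).pow_const 2).aestronglyMeasurable
      rw [hγ2] at h
      rw [← h]
      exact hq_m2 i
    have hkey : ∀ i, (bb i - tμ i) ^ 2 + (|a i| - |tσ i|) ^ 2
        ≤ ∫ z, (z.1 i - z.2 i) ^ 2 ∂γ :=
      fun i => sq_int_lower _ _ (hU i) (hV i) (bb i) (tμ i) |a i| |tσ i|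
        (abs_nonneg _) (abs_nonneg _) (hUm i) (hVm i) (hU2 i) (hV2 i)
    have hsplit : ∫ z, ∑ i, (z.1 i - z.2 i) ^ 2 ∂γ
        = ∑ i, ∫ z, (z.1 i - z.2 i) ^ 2 ∂γ :=
      integral_finset_sum _ (fun i _ => ((hU i).sub (hV i)).integrable_sq)
    rw [hsplit, hτ, Finset.sum_add_distrib.symm]
    exact Finset.sum_le_sum fun i _ => hkey i
  rw [W2sqPi, hRHS]
  exact IsLeast.csInf_eq ⟨hmem, hlb⟩
end

section
/- Let g : ℝ → ℝ satisfy Real.erf (g x) = x for all x ∈ (−1, 1) and g (Real.erf y) = y for all y ∈ ℝ (g is the inverse error function). Then for every x ∈ (−1, 1), the function u ↦ u/2 − (1/√π) · (g u) · exp(−(g u)²) has derivative (g x)² at x; that is, x/2 − (1/√π) erf⁻¹(x) e^{−(erf⁻¹(x))²} is an antiderivative of (erf⁻¹)² on (−1, 1). -/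
open MeasureTheory ProbabilityTheory
open scoped ENNReal NNReal

/-- The error function `erf x = (2/√π) ∫₀ˣ e^{-s²} ds`. -/
noncomputable def Real.erf (x : ℝ) : ℝ :=
  2 / Real.sqrt Real.pi * ∫ s in (0:ℝ)..x, Real.exp (-s ^ 2)

lemma erf_hasDerivAt (y : ℝ) :
    HasDerivAt Real.erf (2 / Real.sqrt Real.pi * Real.exp (-y ^ 2)) y := by
  have hcont : Continuous fun s : ℝ => Real.exp (-s ^ 2) := by continuity
  have h1 : HasDerivAt (fun u => ∫ s in (0:ℝ)..u, Real.exp (-s ^ 2)) (Real.exp (-y ^ 2)) y :=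
    intervalIntegral.integral_hasDerivAt_right (hcont.intervalIntegrable _ _)
      (hcont.stronglyMeasurable.stronglyMeasurableAtFilter) hcont.continuousAt
  exact h1.const_mul (2 / Real.sqrt Real.pi)

lemma erf_strictMono : StrictMono Real.erf := by
  have hπ : (0:ℝ) < Real.sqrt Real.pi := Real.sqrt_pos.mpr Real.pi_pos
  apply strictMono_of_deriv_pos
  intro y
  rw [(erf_hasDerivAt y).deriv]
  positivity

/-- x/2 - (1/√π)·(erfinv x)·exp(-(erfinv x)²) is an antiderivative of the square of the
inverse error function on (-1, 1). -/
theorem hasDerivAt_antideriv_erfInv_sq (g : ℝ → ℝ)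
    (hg₁ : ∀ x ∈ Set.Ioo (-1 : ℝ) 1, Real.erf (g x) = x)
    (hg₂ : ∀ y : ℝ, g (Real.erf y) = y) :
    ∀ x ∈ Set.Ioo (-1 : ℝ) 1,
      HasDerivAt (fun u => u / 2 - 1 / Real.sqrt Real.pi * g u * Real.exp (-(g u) ^ 2))
        ((g x) ^ 2) x := by
  intro x hx
  have hπ : (0:ℝ) < Real.sqrt Real.pi := Real.sqrt_pos.mpr Real.pi_pos
  have hxg : Real.erf (g x) = x := hg₁ x hx
  -- continuity of g at x
  have hgc : ContinuousAt g x := by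
    rw [Metric.continuousAt_iff]
    intro ε hε
    have h1 : Real.erf (g x - ε) < x := by
      have := erf_strictMono (show g x - ε < g x by linarith); rwa [hxg] at this
    have h2 : x < Real.erf (g x + ε) := by
      have := erf_strictMono (show g x < g x + ε by linarith); rwa [hxg] at this
    have hopen : Set.Ioo (-1 : ℝ) 1 ∩ Set.Ioo (Real.erf (g x - ε)) (Real.erf (g x + ε)) ∈ nhds x :=
      Filter.inter_mem (isOpen_Ioo.mem_nhds hx) (isOpen_Ioo.mem_nhds ⟨h1, h2⟩)
    rcases Metric.mem_nhds_iff.1 hopen with ⟨δ, hδ, hball⟩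
    refine ⟨δ, hδ, fun {y} hy => ?_⟩
    have hy' := hball hy
    have hgy : Real.erf (g y) = y := hg₁ y hy'.1
    have hl : g x - ε < g y := by
      have := hy'.2.1; rw [← hgy] at this; exact erf_strictMono.lt_iff_lt.1 this
    have hr : g y < g x + ε := by
      have := hy'.2.2; rw [← hgy] at this; exact erf_strictMono.lt_iff_lt.1 this
    rw [Real.dist_eq, abs_lt]; constructor <;> linarith
  -- derivative of g
  have hne : 2 / Real.sqrt Real.pi * Real.exp (-(g x) ^ 2) ≠ 0 := by positivity
  have hev : ∀ᶠ y in nhds x, Real.erf (g y) = y :=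
    Filter.eventually_of_mem (isOpen_Ioo.mem_nhds hx) hg₁
  have hg' : HasDerivAt g (2 / Real.sqrt Real.pi * Real.exp (-(g x) ^ 2))⁻¹ x :=
    HasDerivAt.of_local_left_inverse hgc (erf_hasDerivAt (g x)) hne hev
  -- assemble
  set c : ℝ := (2 / Real.sqrt Real.pi * Real.exp (-(g x) ^ 2))⁻¹ with hc
  have hexp : HasDerivAt (fun u => Real.exp (-(g u) ^ 2))
      (Real.exp (-(g x) ^ 2) * (-(2 * g x * c))) x := by
    have h1 : HasDerivAt (fun u => -(g u) ^ 2) (-(2 * g x * c)) x := by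
      have := ((hg'.pow 2).neg)
      exact this.congr_deriv (by ring)
    exact (Real.hasDerivAt_exp _).comp x h1
  have hmul : HasDerivAt (fun u => 1 / Real.sqrt Real.pi * g u * Real.exp (-(g u) ^ 2))
      (1 / Real.sqrt Real.pi * c * Real.exp (-(g x) ^ 2)
        + 1 / Real.sqrt Real.pi * g x * (Real.exp (-(g x) ^ 2) * (-(2 * g x * c)))) x :=
    ((hg'.const_mul (1 / Real.sqrt Real.pi)).mul hexp)
  have hfull := ((hasDerivAt_id x).div_const 2).sub hmul
  refine hfull.congr_deriv ?_
  have he : Real.exp (-(g x) ^ 2) ≠ 0 := (Real.exp_pos _).ne'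
  rw [hc]
  field_simp
  ring
end

section
/- Let μ₁, μ₂ ∈ ℝ and σ₁, σ₂, σ₃, σ₄ > 0. Let p be the pushforward of the uniform probability measure on [−√3, √3] under the map x ↦ (if x ≤ 0 then σ₁·x + μ₁ else σ₂·x + μ₁), and let q be the pushforward of the uniform probability measure on [−√3, √3] under x ↦ (if x ≤ 0 then σ₃·x + μ₂ else σ₄·x + μ₂). Then W₂²(p, q) = (μ₁ − μ₂)² + (1/2)(σ₁ − σ₃)² + (1/2)(σ₂ − σ₄)² + √(3/4)·(μ₁ − μ₂)·(σ₂ − σ₁ + σ₃ − σ₄). -/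
open MeasureTheory ProbabilityTheory
open scoped ENNReal NNReal

/-- Squared 2-Wasserstein distance between two measures on a normed space `E`:
the infimum over all couplings `γ` of `p` and `q` of `∫ ‖x - y‖² dγ(x, y)`. -/
noncomputable def W2sq {E : Type*} [NormedAddCommGroup E] [MeasurableSpace E]
    (p q : Measure E) : ℝ :=
  sInf { c | ∃ γ : Measure (E × E), IsProbabilityMeasure γ ∧
    γ.map Prod.fst = p ∧ γ.map Prod.snd = q ∧ c = ∫ z, ‖z.1 - z.2‖ ^ 2 ∂γ }

/-! Write `f`, `g` for the two piecewise affine maps. The monotone coupling `t ↦ (f t, g t)` of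
the two pushforwards is optimal. To certify this, take the convex potential `φ` whose derivative
is the monotone map `g ∘ f⁻¹` (a quadratic with different curvatures on the two sides of `μ₁`)
and its convex conjugate `ψ`. Young's inequality `x y ≤ φ x + ψ y` is an equality on the graph of
`g ∘ f⁻¹`, so `A = x² - 2 φ` and `B = y² - 2 ψ` are Kantorovich potentials: `∫ A dp + ∫ B dq`
bounds the cost of every coupling from below and equals the cost of the monotone one. That cost
is the integral of a piecewise quadratic. -/

section Coupling

variable {E : Type*} [NormedAddCommGroup E] [MeasurableSpace E] {p q : Measure E}

lemma W2sq_le_integral_of_coupling (γ : Measure (E × E)) [IsProbabilityMeasure γ]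
    (h₁ : γ.map Prod.fst = p) (h₂ : γ.map Prod.snd = q) :
    W2sq p q ≤ ∫ z, ‖z.1 - z.2‖ ^ 2 ∂γ :=
  csInf_le ⟨0, by rintro c ⟨γ, -, -, -, rfl⟩; positivity⟩ ⟨γ, inferInstance, h₁, h₂, rfl⟩

lemma integrable_sq_norm_sub_of_coupling [BorelSpace E] [SecondCountableTopology E]
    {γ : Measure (E × E)} (h₁ : γ.map Prod.fst = p) (h₂ : γ.map Prod.snd = q)
    (hp : Integrable (fun x => ‖x‖ ^ 2) p) (hq : Integrable (fun y => ‖y‖ ^ 2) q) :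
    Integrable (fun z : E × E => ‖z.1 - z.2‖ ^ 2) γ := by
  subst h₁ h₂
  refine (((hp.comp_measurable measurable_fst).add (hq.comp_measurable measurable_snd)).const_mul
    2).mono' (by fun_prop) (ae_of_all _ fun z => ?_)
  rw [Real.norm_of_nonneg (by positivity)]
  calc ‖z.1 - z.2‖ ^ 2 ≤ (‖z.1‖ + ‖z.2‖) ^ 2 := by gcongr; exact norm_sub_le _ _
    _ ≤ 2 * (‖z.1‖ ^ 2 + ‖z.2‖ ^ 2) := add_sq_le

lemma integral_add_integral_le_integral_of_coupling {γ : Measure (E × E)}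
    (h₁ : γ.map Prod.fst = p) (h₂ : γ.map Prod.snd = q) {A B : E → ℝ}
    (hA : Integrable A p) (hB : Integrable B q)
    (hγ : Integrable (fun z : E × E => ‖z.1 - z.2‖ ^ 2) γ)
    (hAB : ∀ x y, A x + B y ≤ ‖x - y‖ ^ 2) :
    ∫ x, A x ∂p + ∫ y, B y ∂q ≤ ∫ z, ‖z.1 - z.2‖ ^ 2 ∂γ := by
  subst h₁ h₂
  have hA₁ : Integrable (fun z : E × E => A z.1) γ := hA.comp_measurable measurable_fst
  have hB₂ : Integrable (fun z : E × E => B z.2) γ := hB.comp_measurable measurable_snd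
  rw [integral_map measurable_fst.aemeasurable hA.aestronglyMeasurable,
    integral_map measurable_snd.aemeasurable hB.aestronglyMeasurable, ← integral_add hA₁ hB₂]
  exact integral_mono (hA₁.add hB₂) hγ fun z => hAB z.1 z.2

lemma le_W2sq_of_potentials [BorelSpace E] [SecondCountableTopology E]
    [IsProbabilityMeasure p] [IsProbabilityMeasure q]
    (hp : Integrable (fun x => ‖x‖ ^ 2) p) (hq : Integrable (fun y => ‖y‖ ^ 2) q)
    {A B : E → ℝ} (hA : Integrable A p) (hB : Integrable B q)
    (hAB : ∀ x y, A x + B y ≤ ‖x - y‖ ^ 2) :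
    ∫ x, A x ∂p + ∫ y, B y ∂q ≤ W2sq p q := by
  refine le_csInf ⟨_, p.prod q, inferInstance, by simp, by simp, rfl⟩ ?_
  rintro c ⟨γ, -, h₁, h₂, rfl⟩
  exact integral_add_integral_le_integral_of_coupling h₁ h₂ hA hB
    (integrable_sq_norm_sub_of_coupling h₁ h₂ hp hq) hAB

theorem W2sq_map_eq_integral_of_potentials [BorelSpace E] [SecondCountableTopology E]
    {Ω : Type*} [MeasurableSpace Ω] {μ : Measure Ω} [IsProbabilityMeasure μ] {f g : Ω → E}
    (hf : Measurable f) (hg : Measurable g)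
    (hf₂ : Integrable (fun ω => ‖f ω‖ ^ 2) μ) (hg₂ : Integrable (fun ω => ‖g ω‖ ^ 2) μ)
    {A B : E → ℝ} (hA : Measurable A) (hB : Measurable B)
    (hAf : Integrable (fun ω => A (f ω)) μ) (hBg : Integrable (fun ω => B (g ω)) μ)
    (hAB : ∀ x y, A x + B y ≤ ‖x - y‖ ^ 2)
    (hfg : ∀ᵐ ω ∂μ, A (f ω) + B (g ω) = ‖f ω - g ω‖ ^ 2) :
    W2sq (μ.map f) (μ.map g) = ∫ ω, ‖f ω - g ω‖ ^ 2 ∂μ := by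
  have hfg_meas : Measurable fun ω => (f ω, g ω) := hf.prodMk hg
  have : IsProbabilityMeasure (μ.map f) := Measure.isProbabilityMeasure_map hf.aemeasurable
  have : IsProbabilityMeasure (μ.map g) := Measure.isProbabilityMeasure_map hg.aemeasurable
  have : IsProbabilityMeasure (μ.map fun ω => (f ω, g ω)) :=
    Measure.isProbabilityMeasure_map hfg_meas.aemeasurable
  have hmap (h : E → ℝ) (hh : Measurable h) (u : Ω → E) (hu : Measurable u) :
      Integrable h (μ.map u) ↔ Integrable (fun ω => h (u ω)) μ :=
    integrable_map_measure hh.aestronglyMeasurable hu.aemeasurable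
  apply le_antisymm
  · refine (W2sq_le_integral_of_coupling (μ.map fun ω => (f ω, g ω))
      (by rw [Measure.map_map measurable_fst hfg_meas]; rfl)
      (by rw [Measure.map_map measurable_snd hfg_meas]; rfl)).trans_eq ?_
    rw [integral_map hfg_meas.aemeasurable (by fun_prop)]
  · calc ∫ ω, ‖f ω - g ω‖ ^ 2 ∂μ = ∫ ω, A (f ω) + B (g ω) ∂μ :=
          integral_congr_ae (hfg.mono fun ω h => h.symm)
      _ = ∫ x, A x ∂μ.map f + ∫ y, B y ∂μ.map g := by
          rw [integral_add hAf hBg, integral_map hf.aemeasurable hA.aestronglyMeasurable,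
            integral_map hg.aemeasurable hB.aestronglyMeasurable]
      _ ≤ W2sq (μ.map f) (μ.map g) :=
          le_W2sq_of_potentials ((hmap _ (by fun_prop) f hf).2 hf₂)
            ((hmap _ (by fun_prop) g hg).2 hg₂) ((hmap A hA f hf).2 hAf)
            ((hmap B hB g hg).2 hBg) hAB

end Coupling

lemma isProbabilityMeasure_unif {a b : ℝ} (hab : a < b) : IsProbabilityMeasure (unif a b) :=
  ⟨by simp [unif, ENNReal.inv_mul_cancel, hab]⟩

lemma Continuous.integrable_unif {a b : ℝ} (hab : a < b) {h : ℝ → ℝ} (hh : Continuous h) :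
    Integrable h (unif a b) :=
  (hh.integrableOn_Icc).smul_measure (by simpa using hab)

lemma integral_unif_s9 {a b : ℝ} (hab : a ≤ b) (h : ℝ → ℝ) :
    ∫ x, h x ∂unif a b = (b - a)⁻¹ * ∫ x in a..b, h x := by
  rw [unif, integral_smul_measure, intervalIntegral.integral_of_le hab,
    integral_Icc_eq_integral_Ioc, ENNReal.toReal_inv, ENNReal.toReal_ofReal (by linarith),
    smul_eq_mul]

theorem W2sq_map_unif_eq_of_young {a b : ℝ} (hab : a < b) {f g : ℝ → ℝ} (hf : Continuous f)
    (hg : Continuous g) {φ ψ : ℝ → ℝ} (hφ : Continuous φ) (hψ : Continuous ψ)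
    (hφψ : ∀ x y, x * y ≤ φ x + ψ y) (hfg : ∀ t, φ (f t) + ψ (g t) = f t * g t) :
    W2sq ((unif a b).map f) ((unif a b).map g) = ∫ t, (f t - g t) ^ 2 ∂unif a b := by
  have := isProbabilityMeasure_unif hab
  have hA : Continuous fun x => x ^ 2 - 2 * φ x := by fun_prop
  have hB : Continuous fun y => y ^ 2 - 2 * ψ y := by fun_prop
  simp only [← sq_abs (f _ - g _), ← Real.norm_eq_abs]
  refine W2sq_map_eq_integral_of_potentials hf.measurable hg.measurable
    ((by fun_prop : Continuous _).integrable_unif hab)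
    ((by fun_prop : Continuous _).integrable_unif hab) hA.measurable hB.measurable
    ((hA.comp hf).integrable_unif hab) ((hB.comp hg).integrable_unif hab)
    (fun x y => ?_) (ae_of_all _ fun t => ?_)
  · rw [Real.norm_eq_abs, sq_abs]
    linarith [hφψ x y]
  · rw [Real.norm_eq_abs, sq_abs]
    linear_combination -2 * hfg t

noncomputable def pwAffine (s s' m x : ℝ) : ℝ := if x ≤ 0 then s * x + m else s' * x + m

noncomputable def kinkQuad (a b x : ℝ) : ℝ := if x ≤ 0 then a * x ^ 2 / 2 else b * x ^ 2 / 2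

@[fun_prop]
lemma continuous_pwAffine (s s' m : ℝ) : Continuous (pwAffine s s' m) :=
  Continuous.if_le (by fun_prop) (by fun_prop) continuous_id continuous_const
    fun x hx => by simp [hx]

lemma pwAffine_of_nonpos {x : ℝ} (hx : x ≤ 0) (s s' m : ℝ) : pwAffine s s' m x = s * x + m :=
  if_pos hx

lemma pwAffine_of_nonneg {x : ℝ} (hx : 0 ≤ x) (s s' m : ℝ) : pwAffine s s' m x = s' * x + m := by
  rcases hx.eq_or_lt with rfl | hx
  · simp [pwAffine]
  · exact if_neg hx.not_ge

lemma pwAffine_eq_add (s s' m x : ℝ) : pwAffine s s' m x = pwAffine s s' 0 x + m := by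
  unfold pwAffine; split_ifs <;> ring

lemma pwAffine_sub_pwAffine (s₁ s₂ m₁ s₃ s₄ m₂ x : ℝ) :
    pwAffine s₁ s₂ m₁ x - pwAffine s₃ s₄ m₂ x = pwAffine (s₁ - s₃) (s₂ - s₄) (m₁ - m₂) x := by
  unfold pwAffine; split_ifs <;> ring

@[fun_prop]
lemma continuous_kinkQuad (a b : ℝ) : Continuous (kinkQuad a b) :=
  Continuous.if_le (by fun_prop) (by fun_prop) continuous_id continuous_const
    fun x hx => by simp [hx]

/-- Fenchel–Young: `kinkQuad a⁻¹ b⁻¹` is the convex conjugate of `kinkQuad a b`. -/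
lemma mul_le_kinkQuad_add_kinkQuad_inv {a b : ℝ} (ha : 0 < a) (hb : 0 < b) (u v : ℝ) :
    u * v ≤ kinkQuad a b u + kinkQuad a⁻¹ b⁻¹ v := by
  have young (c : ℝ) (hc : 0 < c) : u * v ≤ c * u ^ 2 / 2 + c⁻¹ * v ^ 2 / 2 := by
    have := two_mul_le_add_sq (c * u) v
    field_simp
    nlinarith
  have hua := mul_nonneg ha.le (sq_nonneg u)
  have hub := mul_nonneg hb.le (sq_nonneg u)
  have hva := mul_nonneg (inv_pos.2 ha).le (sq_nonneg v)
  have hvb := mul_nonneg (inv_pos.2 hb).le (sq_nonneg v)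
  unfold kinkQuad
  split_ifs with hu hv hv
  · exact young a ha
  · nlinarith [mul_nonpos_of_nonpos_of_nonneg hu (le_of_not_ge hv)]
  · nlinarith [mul_nonpos_of_nonneg_of_nonpos (le_of_not_ge hu) hv]
  · exact young b hb

/-- The equality case: `pwAffine τ τ' 0 t` is the derivative of `kinkQuad (τ / σ) (τ' / σ')` at
`pwAffine σ σ' 0 t`. -/
lemma kinkQuad_add_kinkQuad_inv_pwAffine {σ σ' τ τ' : ℝ} (hσ : 0 < σ) (hσ' : 0 < σ')
    (hτ : 0 < τ) (hτ' : 0 < τ') (t : ℝ) :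
    kinkQuad (τ / σ) (τ' / σ') (pwAffine σ σ' 0 t)
        + kinkQuad (τ / σ)⁻¹ (τ' / σ')⁻¹ (pwAffine τ τ' 0 t)
      = pwAffine σ σ' 0 t * pwAffine τ τ' 0 t := by
  rcases le_or_gt t 0 with ht | ht
  · have h₁ : σ * t ≤ 0 := mul_nonpos_of_nonneg_of_nonpos hσ.le ht
    have h₂ : τ * t ≤ 0 := mul_nonpos_of_nonneg_of_nonpos hτ.le ht
    simp only [pwAffine, kinkQuad, if_pos ht, add_zero, if_pos h₁, if_pos h₂]
    field_simp
    ring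
  · have h₁ : ¬ σ' * t ≤ 0 := not_le.2 (mul_pos hσ' ht)
    have h₂ : ¬ τ' * t ≤ 0 := not_le.2 (mul_pos hτ' ht)
    simp only [pwAffine, kinkQuad, if_neg ht.not_ge, add_zero, if_neg h₁, if_neg h₂]
    field_simp
    ring

lemma integral_affine_sq (d c a b : ℝ) :
    ∫ x in a..b, (d * x + c) ^ 2
      = c ^ 2 * (b - a) + c * d * (b ^ 2 - a ^ 2) + d ^ 2 * (b ^ 3 - a ^ 3) / 3 := by
  have h (x : ℝ) : (d * x + c) ^ 2 = d ^ 2 * x ^ 2 + ((2 * c * d) * x + c ^ 2) := by ring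
  simp_rw [h]
  rw [intervalIntegral.integral_add (Continuous.intervalIntegrable (by fun_prop) _ _)
      (Continuous.intervalIntegrable (by fun_prop) _ _),
    intervalIntegral.integral_add (Continuous.intervalIntegrable (by fun_prop) _ _)
      (Continuous.intervalIntegrable (by fun_prop) _ _),
    intervalIntegral.integral_const_mul, intervalIntegral.integral_const_mul, integral_pow,
    integral_id, intervalIntegral.integral_const, smul_eq_mul]
  ring

lemma integral_pwAffine_sq (s s' m : ℝ) {r : ℝ} (hr : 0 ≤ r) :
    ∫ x in -r..r, pwAffine s s' m x ^ 2
      = 2 * m ^ 2 * r + m * (s' - s) * r ^ 2 + (s ^ 2 + s' ^ 2) * r ^ 3 / 3 := by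
  have hint (a b : ℝ) : IntervalIntegrable (fun x => pwAffine s s' m x ^ 2) volume a b :=
    ((continuous_pwAffine s s' m).pow 2).intervalIntegrable a b
  have hneg : ∫ x in -r..0, pwAffine s s' m x ^ 2 = ∫ x in -r..0, (s * x + m) ^ 2 :=
    intervalIntegral.integral_congr fun x hx => by
      rw [Set.uIcc_of_le (by linarith)] at hx
      rw [pwAffine_of_nonpos hx.2]
  have hpos : ∫ x in (0 : ℝ)..r, pwAffine s s' m x ^ 2 = ∫ x in (0 : ℝ)..r, (s' * x + m) ^ 2 :=
    intervalIntegral.integral_congr fun x hx => by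
      rw [Set.uIcc_of_le hr] at hx
      rw [pwAffine_of_nonneg hx.1]
  rw [← intervalIntegral.integral_add_adjacent_intervals (hint _ 0) (hint 0 _), hneg, hpos,
    integral_affine_sq, integral_affine_sq]
  ring

theorem W2sq_map_unif_pwAffine {a b : ℝ} (hab : a < b) (μ₁ μ₂ : ℝ) {σ₁ σ₂ σ₃ σ₄ : ℝ}
    (hσ₁ : 0 < σ₁) (hσ₂ : 0 < σ₂) (hσ₃ : 0 < σ₃) (hσ₄ : 0 < σ₄) :
    W2sq ((unif a b).map (pwAffine σ₁ σ₂ μ₁)) ((unif a b).map (pwAffine σ₃ σ₄ μ₂))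
      = ∫ t, pwAffine (σ₁ - σ₃) (σ₂ - σ₄) (μ₁ - μ₂) t ^ 2 ∂unif a b := by
  simp only [← pwAffine_sub_pwAffine]
  -- the potentials come from `x y = (x - μ₁) (y - μ₂) + μ₂ x + μ₁ y - μ₁ μ₂`
  refine W2sq_map_unif_eq_of_young hab (continuous_pwAffine _ _ _) (continuous_pwAffine _ _ _)
    (φ := fun x => kinkQuad (σ₃ / σ₁) (σ₄ / σ₂) (x - μ₁) + μ₂ * x)
    (ψ := fun y => kinkQuad (σ₃ / σ₁)⁻¹ (σ₄ / σ₂)⁻¹ (y - μ₂) + μ₁ * y - μ₁ * μ₂)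
    (by fun_prop) (by fun_prop) (fun x y => ?_) (fun t => ?_)
  · have := mul_le_kinkQuad_add_kinkQuad_inv (div_pos hσ₃ hσ₁) (div_pos hσ₄ hσ₂) (x - μ₁) (y - μ₂)
    linarith
  · simp only [pwAffine_eq_add _ _ μ₁, pwAffine_eq_add _ _ μ₂, add_sub_cancel_right]
    linear_combination kinkQuad_add_kinkQuad_inv_pwAffine hσ₁ hσ₂ hσ₃ hσ₄ t

/-- Squared 2-Wasserstein distance between pushforwards of the uniform measure on
[-√3, √3] under two piecewise linear (two-piece) maps. -/
theorem W2sq_piecewise_pushforward_unif (μ₁ μ₂ σ₁ σ₂ σ₃ σ₄ : ℝ)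
    (hσ₁ : 0 < σ₁) (hσ₂ : 0 < σ₂) (hσ₃ : 0 < σ₃) (hσ₄ : 0 < σ₄) :
    W2sq
      ((unif (-Real.sqrt 3) (Real.sqrt 3)).map
        fun x => if x ≤ 0 then σ₁ * x + μ₁ else σ₂ * x + μ₁)
      ((unif (-Real.sqrt 3) (Real.sqrt 3)).map
        fun x => if x ≤ 0 then σ₃ * x + μ₂ else σ₄ * x + μ₂) =
      (μ₁ - μ₂) ^ 2 + (1 / 2) * (σ₁ - σ₃) ^ 2 + (1 / 2) * (σ₂ - σ₄) ^ 2
        + Real.sqrt (3 / 4) * (μ₁ - μ₂) * (σ₂ - σ₁ + σ₃ - σ₄) := by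
  have hs : 0 < √3 := by positivity
  have hs₂ : √3 ^ 2 = 3 := Real.sq_sqrt (by norm_num)
  have hs' : √(3 / 4) = √3 / 2 := by
    rw [Real.sqrt_div' _ (by norm_num), show (4 : ℝ) = 2 ^ 2 by norm_num, Real.sqrt_sq two_pos.le]
  change W2sq ((unif _ _).map (pwAffine σ₁ σ₂ μ₁)) ((unif _ _).map (pwAffine σ₃ σ₄ μ₂)) = _
  rw [W2sq_map_unif_pwAffine (neg_lt_self hs) μ₁ μ₂ hσ₁ hσ₂ hσ₃ hσ₄,
    integral_unif_s9 (neg_le_self hs.le), integral_pwAffine_sq _ _ _ hs.le, hs']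
  field_simp
  linear_combination 2 * ((σ₁ - σ₃) ^ 2 + (σ₂ - σ₄) ^ 2) * hs₂
end
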